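/- Let K_1,...,K_j be convex bodies in R^n with j ≤ n, pairwise contained in mutually orthogonal linear subspaces, and with equal Euclidean circumradii R(K_1) = ... = R(K_j). Then R(K_1) + ... + R(K_j) = √j · R(K_1 + ... + K_j). -/

import Mathlib

/-!
Every compact set has a circumcentre, and for `K i ⊆ V i` it may be taken in `V i`. With centres
`c i ∈ V i`, Pythagoras over the mutually orthogonal `V i` puts `∑ K i` inside the ball of radius
`√(∑ R(K i)²)` about `∑ c i`. Conversely, if a ball `B(x, ρ)` contains `∑ K i`, let `x i` be the
orthogonal projection of `x` onto `V i`; then `x - ∑ x i` is orthogonal to every `V i`, and choosing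
`k i ∈ K i` at distance at least `R(K i)` from `x i` gives
`ρ ≥ ‖∑ k i - x‖ ≥ ‖∑ (k i - x i)‖ = √(∑ ‖k i - x i‖²) ≥ √(∑ R(K i)²)`.
So `R(∑ K i)² = ∑ R(K i)²`, which for equal radii is the claim.
-/

open Metric Finset

/-- The Euclidean circumradius of a set `K`: the smallest `ρ ≥ 0` such that `K` is
contained in some closed ball of radius `ρ`. -/
noncomputable def circR {n : ℕ} (K : Set (EuclideanSpace ℝ (Fin n))) : ℝ :=
  sInf {ρ : ℝ | 0 ≤ ρ ∧ ∃ x, K ⊆ Metric.closedBall x ρ}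

/-- The Minkowski sum of a finite family of subsets of `ℝⁿ`. -/
def msum {n j : ℕ} (K : Fin j → Set (EuclideanSpace ℝ (Fin n))) :
    Set (EuclideanSpace ℝ (Fin n)) :=
  {x | ∃ f : Fin j → EuclideanSpace ℝ (Fin n), (∀ i, f i ∈ K i) ∧ x = ∑ i, f i}

namespace OrthogonalFamily

variable {E ι : Type*} [NormedAddCommGroup E] [InnerProductSpace ℝ E] [Fintype ι]
  {V : ι → Submodule ℝ E} (hV : OrthogonalFamily ℝ (fun i => V i) fun i => (V i).subtypeₗᵢ)
include hV

theorem norm_sum_sub_sum {v w : ι → E} (hv : ∀ i, v i ∈ V i) (hw : ∀ i, w i ∈ V i) :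
    ‖∑ i, v i - ∑ i, w i‖ = √(∑ i, ‖v i - w i‖ ^ 2) := by
  rw [← Real.sqrt_sq (norm_nonneg _), ← sum_sub_distrib]
  exact congrArg Real.sqrt (hV.norm_sum (fun i => ⟨v i - w i, sub_mem (hv i) (hw i)⟩) univ)

theorem inner_sum_starProjection [∀ i, (V i).HasOrthogonalProjection] {i : ι} {u : E}
    (hu : u ∈ V i) (x : E) : inner ℝ u (∑ l, (V l).starProjection x) = inner ℝ u x := by
  rw [_root_.inner_sum, sum_eq_single i (fun l _ hli => hV.isOrtho (Ne.symm hli) |>.inner_eq hu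
      (Submodule.starProjection_apply_mem _ x)) (by simp),
    ← Submodule.inner_starProjection_left_eq_right, Submodule.starProjection_eq_self_iff.2 hu]

theorem norm_sum_sub_sum_starProjection_le [∀ i, (V i).HasOrthogonalProjection] {v : ι → E}
    (hv : ∀ i, v i ∈ V i) (x : E) :
    ‖∑ i, v i - ∑ i, (V i).starProjection x‖ ≤ ‖∑ i, v i - x‖ := by
  have horth : inner ℝ (∑ i, v i - ∑ i, (V i).starProjection x)
      (∑ i, (V i).starProjection x - x) = 0 := by
    rw [← sum_sub_distrib, sum_inner]
    refine sum_eq_zero fun i _ => ?_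
    have hmem := sub_mem (hv i) (Submodule.starProjection_apply_mem (V i) x)
    rw [inner_sub_right, hV.inner_sum_starProjection hmem, sub_self]
  have hpyth := norm_add_sq_eq_norm_sq_add_norm_sq_real horth
  rw [sub_add_sub_cancel] at hpyth
  rw [mul_self_le_mul_self_iff (norm_nonneg _) (norm_nonneg _), hpyth]
  exact le_add_of_nonneg_right (mul_self_nonneg _)

end OrthogonalFamily

theorem Submodule.dist_starProjection_le {E : Type*} [NormedAddCommGroup E]
    [InnerProductSpace ℝ E] {U : Submodule ℝ E} [U.HasOrthogonalProjection] {k : E} (hk : k ∈ U)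
    (x : E) : dist k (U.starProjection x) ≤ dist k x := by
  rw [dist_eq_norm, dist_eq_norm, ← U.starProjection_eq_self_iff.2 hk, ← map_sub,
    U.starProjection_eq_self_iff.2 hk]
  exact U.norm_starProjection_apply_le _

section circR

variable {n : ℕ} {K : Set (EuclideanSpace ℝ (Fin n))}

theorem circR_nonneg : 0 ≤ circR K :=
  Real.sInf_nonneg fun _ hρ => hρ.1

theorem IsCompact.exists_subset_closedBall_circR (hK : IsCompact K) (hne : K.Nonempty) :
    ∃ c, K ⊆ closedBall c (circR K) := by
  obtain ⟨k₀, hk₀⟩ := hne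
  set g : EuclideanSpace ℝ (Fin n) → ℝ := fun x => sSup ((dist · x) '' K)
  have hdist_le : ∀ x, ∀ k ∈ K, dist k x ≤ g x := fun x k hk =>
    le_csSup (hK.bddAbove_image (by fun_prop)) (Set.mem_image_of_mem _ hk)
  have hg_le : ∀ x ρ, K ⊆ closedBall x ρ → g x ≤ ρ := fun x ρ hx =>
    csSup_le (Set.Nonempty.image _ ⟨k₀, hk₀⟩) (Set.forall_mem_image.2 fun k hk => hx hk)
  obtain ⟨c, hc⟩ := (hK.continuous_sSup (by fun_prop) : Continuous g).exists_forall_le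
    (Filter.tendsto_atTop_mono (fun x => hdist_le x k₀ hk₀) (tendsto_dist_left_cocompact_atTop k₀))
  have hball : K ⊆ closedBall c (g c) := fun k hk => mem_closedBall.2 (hdist_le c k hk)
  refine ⟨c, hball.trans (closedBall_subset_closedBall ?_)⟩
  refine le_csInf ⟨g c, dist_nonneg.trans (hdist_le c k₀ hk₀), c, hball⟩ ?_
  rintro ρ ⟨-, x, hx⟩
  exact (hc x).trans (hg_le x ρ hx)

theorem IsCompact.exists_circR_le_dist (hK : IsCompact K) (hne : K.Nonempty)
    (x : EuclideanSpace ℝ (Fin n)) : ∃ k ∈ K, circR K ≤ dist k x := by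
  by_contra! h
  obtain ⟨r, hr, hKr⟩ := exists_lt_subset_ball hK.isClosed fun k hk => mem_ball.2 (h k hk)
  obtain ⟨k, hk⟩ := hne
  have hr0 : 0 ≤ r := dist_nonneg.trans (mem_ball.1 (hKr hk)).le
  exact hr.not_ge (csInf_le ⟨0, fun _ hρ => hρ.1⟩ ⟨hr0, x, hKr.trans ball_subset_closedBall⟩)

theorem IsCompact.exists_mem_subset_closedBall_circR {V : Submodule ℝ (EuclideanSpace ℝ (Fin n))}
    (hK : IsCompact K) (hne : K.Nonempty) (hKV : K ⊆ V) :
    ∃ c ∈ V, K ⊆ closedBall c (circR K) := by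
  obtain ⟨c, hc⟩ := hK.exists_subset_closedBall_circR hne
  exact ⟨V.starProjection c, V.starProjection_apply_mem c, fun k hk =>
    (V.dist_starProjection_le (hKV hk) c).trans (mem_closedBall.1 (hc hk))⟩

end circR

theorem circR_msum_eq_sqrt_sum_sq {n j : ℕ} {K : Fin j → Set (EuclideanSpace ℝ (Fin n))}
    (hK : ∀ i, IsCompact (K i)) (hne : ∀ i, (K i).Nonempty)
    {V : Fin j → Submodule ℝ (EuclideanSpace ℝ (Fin n))} (hKV : ∀ i, K i ⊆ V i)
    (hV : OrthogonalFamily ℝ (fun i => V i) fun i => (V i).subtypeₗᵢ) :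
    circR (msum K) = √(∑ i, circR (K i) ^ 2) := by
  choose c hcV hc using fun i => (hK i).exists_mem_subset_closedBall_circR (hne i) (hKV i)
  refine IsLeast.csInf_eq ⟨⟨Real.sqrt_nonneg _, ∑ i, c i, ?_⟩, ?_⟩
  · rintro _ ⟨f, hf, rfl⟩
    rw [mem_closedBall, dist_eq_norm, hV.norm_sum_sub_sum (fun i => hKV i (hf i)) hcV]
    gcongr with i
    exact (dist_eq_norm _ _).symm.trans_le (mem_closedBall.1 (hc i (hf i)))
  · rintro ρ ⟨-, x, hx⟩
    choose k hkK hk using fun i => (hK i).exists_circR_le_dist (hne i) ((V i).starProjection x)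
    have hkV : ∀ i, k i ∈ V i := fun i => hKV i (hkK i)
    calc √(∑ i, circR (K i) ^ 2) ≤ √(∑ i, ‖k i - (V i).starProjection x‖ ^ 2) := by
          gcongr with i
          exacts [circR_nonneg, (hk i).trans_eq (dist_eq_norm _ _)]
      _ = ‖∑ i, k i - ∑ i, (V i).starProjection x‖ :=
          (hV.norm_sum_sub_sum hkV fun i => (V i).starProjection_apply_mem x).symm
      _ ≤ ‖∑ i, k i - x‖ := hV.norm_sum_sub_sum_starProjection_le hkV x
      _ ≤ ρ := (dist_eq_norm _ _).symm.trans_le (mem_closedBall.1 (hx ⟨k, hkK, rfl⟩))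

theorem circumradius_sum_sqrt_equality_general {n j : ℕ}
    (K : Fin j → Set (EuclideanSpace ℝ (Fin n)))
    (hcpt : ∀ i, IsCompact (K i))
    (hne : ∀ i, (K i).Nonempty)
    (horth : ∃ V : Fin j → Submodule ℝ (EuclideanSpace ℝ (Fin n)),
      (∀ i, K i ⊆ (V i : Set (EuclideanSpace ℝ (Fin n)))) ∧
        ∀ k l, k ≠ l → ∀ x ∈ V k, ∀ y ∈ V l, (inner ℝ x y : ℝ) = 0)
    (heq : ∀ k l, circR (K k) = circR (K l)) :
    ∑ i, circR (K i) = Real.sqrt j * circR (msum K) := by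
  obtain ⟨V, hKV, hV⟩ := horth
  rw [circR_msum_eq_sqrt_sum_sq hcpt hne hKV fun k l hkl x y => hV k l hkl x x.2 y y.2]
  cases j with
  | zero => simp
  | succ j =>
    have hr : ∀ i, circR (K i) = circR (K 0) := fun i => heq i 0
    simp only [hr, sum_const, card_univ, Fintype.card_fin, nsmul_eq_mul]
    rw [Real.sqrt_mul' _ (sq_nonneg _), Real.sqrt_sq circR_nonneg, ← mul_assoc,
      Real.mul_self_sqrt (Nat.cast_nonneg _)]

theorem circumradius_sum_sqrt_equality {n j : ℕ} (hj : j ≤ n)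
    (K : Fin j → Set (EuclideanSpace ℝ (Fin n)))
    (hconv : ∀ i, Convex ℝ (K i)) (hcpt : ∀ i, IsCompact (K i))
    (hne : ∀ i, (K i).Nonempty)
    (horth : ∃ V : Fin j → Submodule ℝ (EuclideanSpace ℝ (Fin n)),
      (∀ i, K i ⊆ (V i : Set (EuclideanSpace ℝ (Fin n)))) ∧
        ∀ k l, k ≠ l → ∀ x ∈ V k, ∀ y ∈ V l, (inner ℝ x y : ℝ) = 0)
    (heq : ∀ k l, circR (K k) = circR (K l)) :
    ∑ i, circR (K i) = Real.sqrt j * circR (msum K) :=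
  circumradius_sum_sqrt_equality_general K hcpt hne horth heq
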